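/- Let h₁, h₂ ∈ (0,1), τ > 0, μ < 0, and suppose ε h₂ μ ≠ h₁². If τ > -4h₁/(h₂² μ) and ε > 2h₁²/(μ h₂) + h₁ h₂ τ/2, then both roots of the quadratic (h₁² - ε h₂ μ) λ² - (2h₁² + h₂² h₁ τ μ - ε h₂ μ) λ + h₁² = 0 have modulus strictly less than 1. -/

import Mathlib

/-!
The quadratic has real coefficients `A = h₁² - εh₂μ`, `B = 2h₁² + h₂²h₁τμ - εh₂μ`, `C = h₁²`, so
the Jury (Schur–Cohn) criterion applies: both roots lie in the open unit disc as soon as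
`|C| < A`, `p(1) = A - B + C > 0` and `p(-1) = A + B + C > 0`. The bound on `τ` makes `ε` positive,
hence `εh₂μ < 0` and `C < A`; `p(1) = 4h₁² - h₂²h₁τμ` is positive because `μ < 0`, and the bound on
`ε` is exactly `p(-1) > 0`.
-/

theorem abs_lt_one_of_quadratic_root {A B C x : ℝ} (hC : |C| < A) (hm : 0 < A - B + C)
    (hp : 0 < A + B + C) (hx : A * x ^ 2 - B * x + C = 0) : |x| < 1 := by
  rw [← sq_lt_one_iff_abs_lt_one]
  by_contra! hx1
  have key : (A - B + C) * (A + B + C) * x ^ 2 = (1 - x ^ 2) * (A ^ 2 * x ^ 2 - C ^ 2) := by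
    linear_combination (A * x ^ 2 + C + B * x) * hx
  have hCA : C ^ 2 < A ^ 2 := by
    rw [← sq_abs C]
    exact pow_lt_pow_left₀ hC (abs_nonneg C) two_ne_zero
  have hlhs : 0 < (A - B + C) * (A + B + C) * x ^ 2 := by positivity
  have hrhs : (1 - x ^ 2) * (A ^ 2 * x ^ 2 - C ^ 2) ≤ 0 :=
    mul_nonpos_of_nonpos_of_nonneg (by linarith) (by nlinarith)
  linarith

/-- For a non-real root `z` of a real quadratic, `z` and `conj z` are the two roots,
so Vieta gives `C = A * z * conj z`. -/
theorem eq_mul_normSq_of_quadratic_root {A B C : ℝ} {z : ℂ} (hz_im : z.im ≠ 0)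
    (hz : (A : ℂ) * z ^ 2 - B * z + C = 0) : C = A * Complex.normSq z := by
  have hconj : (A : ℂ) * (starRingEnd ℂ z) ^ 2 - B * starRingEnd ℂ z + C = 0 := by
    simpa using congrArg (starRingEnd ℂ) hz
  have hsub : z - starRingEnd ℂ z ≠ 0 := by
    simp [Complex.sub_conj, hz_im]
  have hsum : (A : ℂ) * (z + starRingEnd ℂ z) - B = 0 := by
    refine (mul_eq_zero.mp ?_).resolve_left hsub
    linear_combination hz - hconj
  have hprod : (C : ℂ) = A * (z * starRingEnd ℂ z) := by
    linear_combination hz - z * hsum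
  rw [Complex.mul_conj] at hprod
  exact_mod_cast hprod

theorem norm_lt_one_of_quadratic_root {A B C : ℝ} (hC : |C| < A) (hm : 0 < A - B + C)
    (hp : 0 < A + B + C) {z : ℂ} (hz : (A : ℂ) * z ^ 2 - B * z + C = 0) : ‖z‖ < 1 := by
  by_cases hz_im : z.im = 0
  · have hz_re : z = (z.re : ℂ) := Complex.ext rfl (by simpa using hz_im)
    rw [hz_re] at hz ⊢
    rw [Complex.norm_real, Real.norm_eq_abs]
    exact abs_lt_one_of_quadratic_root hC hm hp (by exact_mod_cast hz)
  · have hCz := eq_mul_normSq_of_quadratic_root hz_im hz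
    have hA : 0 < A := (abs_nonneg C).trans_lt hC
    have hnormSq : Complex.normSq z < 1 := by
      nlinarith [le_abs_self C]
    rw [Complex.normSq_eq_norm_sq] at hnormSq
    exact (sq_lt_one_iff₀ (norm_nonneg z)).mp hnormSq

theorem stmt11_general (h₁ h₂ τ ε μ : ℝ) (hh₁ : h₁ ∈ Set.Ioo (0 : ℝ) 1) (hh₂ : h₂ ∈ Set.Ioo (0 : ℝ) 1)
    (hτ : 0 < τ) (hμ : μ < 0)
    (hτ' : τ > -4 * h₁ / (h₂ ^ 2 * μ))
    (hε : ε > 2 * h₁ ^ 2 / (μ * h₂) + h₁ * h₂ * τ / 2) :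
    ∀ lam : ℂ,
      ((h₁ ^ 2 - ε * h₂ * μ : ℝ) : ℂ) * lam ^ 2 -
        ((2 * h₁ ^ 2 + h₂ ^ 2 * h₁ * τ * μ - ε * h₂ * μ : ℝ) : ℂ) * lam +
        ((h₁ ^ 2 : ℝ) : ℂ) = 0 →
      ‖lam‖ < 1 := by
  intro lam hroot
  obtain ⟨h₁_pos, -⟩ := hh₁
  obtain ⟨h₂_pos, -⟩ := hh₂
  have hμh₂ : μ * h₂ < 0 := mul_neg_of_neg_of_pos hμ h₂_pos
  have hτ'' : τ * (h₂ ^ 2 * μ) < -4 * h₁ :=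
    (div_lt_iff_of_neg (mul_neg_of_pos_of_neg (by positivity) hμ)).mp hτ'
  have hε' : (ε - h₁ * h₂ * τ / 2) * (μ * h₂) < 2 * h₁ ^ 2 :=
    (div_lt_iff_of_neg hμh₂).mp (by linarith)
  have hεh₂μ : ε * h₂ * μ < 0 := by nlinarith
  refine norm_lt_one_of_quadratic_root ?_ ?_ ?_ hroot
  · rw [abs_of_pos (by positivity)]
    linarith
  · nlinarith [mul_pos (mul_pos (pow_pos h₂_pos 2) h₁_pos) hτ]
  · nlinarith

theorem stmt11 (h₁ h₂ τ ε μ : ℝ) (hh₁ : h₁ ∈ Set.Ioo (0 : ℝ) 1) (hh₂ : h₂ ∈ Set.Ioo (0 : ℝ) 1)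
    (hτ : 0 < τ) (hμ : μ < 0) (hne : ε * h₂ * μ ≠ h₁ ^ 2)
    (hτ' : τ > -4 * h₁ / (h₂ ^ 2 * μ))
    (hε : ε > 2 * h₁ ^ 2 / (μ * h₂) + h₁ * h₂ * τ / 2) :
    ∀ lam : ℂ,
      ((h₁ ^ 2 - ε * h₂ * μ : ℝ) : ℂ) * lam ^ 2 -
        ((2 * h₁ ^ 2 + h₂ ^ 2 * h₁ * τ * μ - ε * h₂ * μ : ℝ) : ℂ) * lam +
        ((h₁ ^ 2 : ℝ) : ℂ) = 0 →
      ‖lam‖ < 1 :=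
  stmt11_general h₁ h₂ τ ε μ hh₁ hh₂ hτ hμ hτ' hε
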